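/- Let A be a random symmetric positive definite n × n matrix of the form A = Σ_{l} λ_l z_l z_lᵀ + λ I, where the z_l ∈ ℝⁿ are independent random vectors each with a symmetric distribution (z_l and −z_l have the same law). Then for i ≠ j, E[⟨z_j, A^{−1} z_i⟩] = 0. -/

import Mathlib

open MeasureTheory ProbabilityTheory Matrix
open scoped BigOperators

/-- For `A = ∑_l λ_l z_l z_lᵀ + λ I` with independent, symmetrically
distributed random vectors `z_l`, one has `E[⟨z_j, A⁻¹ z_i⟩] = 0` for `i ≠ j`. -/
theorem stmt14 {n d : ℕ} {Ω : Type*} [MeasureSpace Ω] [IsProbabilityMeasure (ℙ : Measure Ω)]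
    (z : Fin d → Ω → (Fin n → ℝ))
    (hmeas : ∀ l, Measurable (z l))
    (hindep : iIndepFun z (ℙ : Measure Ω))
    (hsymm : ∀ l, Measure.map (z l) (ℙ : Measure Ω) =
      Measure.map (fun ω => -(z l ω)) (ℙ : Measure Ω))
    (lam : Fin d → ℝ) (lam0 : ℝ) (hlam0 : 0 < lam0)
    (A : Ω → Matrix (Fin n) (Fin n) ℝ)
    (hA : ∀ ω, A ω = ∑ l, lam l • Matrix.vecMulVec (z l ω) (z l ω)
        + lam0 • (1 : Matrix (Fin n) (Fin n) ℝ))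
    (i j : Fin d) (hij : i ≠ j)
    (hint : Integrable (fun ω => (z j ω) ⬝ᵥ ((A ω)⁻¹ *ᵥ (z i ω)))) :
    (∫ ω, (z j ω) ⬝ᵥ ((A ω)⁻¹ *ᵥ (z i ω))) = 0 := by
  classical
  set B : (Fin d → Fin n → ℝ) → Matrix (Fin n) (Fin n) ℝ :=
    fun x => ∑ l, lam l • Matrix.vecMulVec (x l) (x l)
      + lam0 • (1 : Matrix (Fin n) (Fin n) ℝ) with hB
  set g : (Fin d → Fin n → ℝ) → ℝ := fun x => (x j) ⬝ᵥ ((B x)⁻¹ *ᵥ (x i)) with hg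
  -- continuity of B
  have hBcont : Continuous B := by
    apply Continuous.add
    · apply continuous_finset_sum
      intro l _
      exact ((continuous_apply l : Continuous fun x : Fin d → Fin n → ℝ => x l).matrix_vecMulVec
          (continuous_apply l : Continuous fun x : Fin d → Fin n → ℝ => x l)).const_smul (lam l)
    · exact continuous_const
  -- measurability of g
  have hgmeas : Measurable g := by
    have hgeq : g = fun x => ∑ a, x j a *
        ∑ b, ((B x).det⁻¹ * (B x).adjugate a b) * x i b := by
      funext x
      simp [hg, dotProduct, Matrix.mulVec, Matrix.inv_def, Ring.inverse_eq_inv',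
        Matrix.smul_apply, smul_eq_mul]
    rw [hgeq]
    have hdet : Measurable fun x => (B x).det := hBcont.matrix_det.measurable
    refine Finset.measurable_sum _ fun a _ => Measurable.mul ?_ ?_
    · exact (measurable_pi_apply a).comp (measurable_pi_apply j)
    · refine Finset.measurable_sum _ fun b _ => Measurable.mul (Measurable.mul ?_ ?_) ?_
      · exact hdet.inv
      · exact (hBcont.matrix_adjugate.matrix_elem a b).measurable
      · exact (measurable_pi_apply b).comp (measurable_pi_apply i)
  -- joint law is the product measure
  set μ : Fin d → Measure (Fin n → ℝ) := fun l => Measure.map (z l) ℙ with hμ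
  have hprob : ∀ l, IsProbabilityMeasure (μ l) := fun l =>
    Measure.isProbabilityMeasure_map (hmeas l).aemeasurable
  set Z : Ω → (Fin d → Fin n → ℝ) := fun ω l => z l ω with hZ
  have hZmeas : Measurable Z := measurable_pi_lambda _ fun l => hmeas l
  haveI : ∀ l, SigmaFinite (μ l) := fun l => by
    have := hprob l; infer_instance
  have hmap : Measure.map Z ℙ = Measure.pi μ := by
    refine (Measure.pi_eq (μ := μ) fun s hs => ?_).symm
    rw [Measure.map_apply hZmeas (MeasurableSet.univ_pi hs)]
    have hset : Z ⁻¹' Set.pi Set.univ s = ⋂ l, z l ⁻¹' s l := by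
      ext ω; simp [hZ, Set.mem_pi]
    rw [hset, hindep.meas_iInter (fun l => ⟨s l, hs l, rfl⟩)]
    exact Finset.prod_congr rfl fun l _ =>
      (Measure.map_apply (hmeas l) (hs l)).symm
  -- the sign flip in coordinate j
  set f : Fin d → (Fin n → ℝ) → (Fin n → ℝ) := fun l v => if l = j then -v else v with hf
  have hpres : ∀ l, MeasurePreserving (f l) (μ l) (μ l) := by
    intro l
    by_cases hlj : l = j
    · subst hlj
      refine ⟨by simpa [hf] using measurable_neg, ?_⟩
      have : Measure.map (fun v : Fin n → ℝ => -v) (μ l) =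
          Measure.map (fun ω => -(z l ω)) ℙ := by
        rw [hμ, Measure.map_map measurable_neg (hmeas l)]
        rfl
      simpa [hf] using this.trans (hsymm l).symm
    · convert MeasurePreserving.id (μ l) using 1
      funext v
      simp [hf, hlj]
  have hflip : MeasurePreserving (fun x : Fin d → Fin n → ℝ => fun l => f l (x l))
      (Measure.pi μ) (Measure.pi μ) := measurePreserving_pi μ μ hpres
  -- g is odd under the flip
  have hodd : ∀ x, g (fun l => f l (x l)) = - g x := by
    intro x
    have hvv : ∀ l, Matrix.vecMulVec (f l (x l)) (f l (x l))
        = Matrix.vecMulVec (x l) (x l) := by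
      intro l
      by_cases hlj : l = j
      · subst hlj
        ext a b
        simp [hf, Matrix.vecMulVec_apply]
      · simp [hf, hlj]
    have hBinv : B (fun l => f l (x l)) = B x := by
      simp only [hB, hvv]
    have h1 : (fun l => f l (x l)) j = -(x j) := by simp [hf]
    have h2 : (fun l => f l (x l)) i = x i := by simp [hf, hij]
    rw [hg]
    simp only [hBinv, h1, h2, neg_dotProduct]
  -- rewrite the integral
  have heq : (fun ω => (z j ω) ⬝ᵥ ((A ω)⁻¹ *ᵥ (z i ω))) = fun ω => g (Z ω) := by
    funext ω
    rw [hg, hA ω]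
  rw [heq]
  have h1 : (∫ ω, g (Z ω)) = ∫ x, g x ∂(Measure.pi μ) := by
    rw [← hmap, integral_map hZmeas.aemeasurable hgmeas.aestronglyMeasurable]
  have h2 : (∫ x, g x ∂(Measure.pi μ)) =
      ∫ x, g (fun l => f l (x l)) ∂(Measure.pi μ) := by
    conv_lhs => rw [← hflip.map_eq]
    rw [integral_map hflip.measurable.aemeasurable hgmeas.aestronglyMeasurable]
  have h3 : (∫ x, g (fun l => f l (x l)) ∂(Measure.pi μ)) = - ∫ x, g x ∂(Measure.pi μ) := by
    simp_rw [hodd]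
    exact integral_neg g
  rw [h1]
  have := h2.trans h3
  linarith
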